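/- arXiv:1101.0099 — 2 statements merged into one kernel-verified Lean document; each statement's English description precedes it below -/
import Mathlib

section
/- There is no periodic billiard trajectory length L_{k,ℓ} = 2k·sin(πℓ/k) strictly between 2π and 8; that is, for all integers k ≥ 2 and 1 ≤ ℓ ≤ k/2, either 2k·sin(πℓ/k) ≤ 2π or 2k·sin(πℓ/k) ≥ 8. -/
/-!
For `ℓ = 1`, `sin x ≤ x` gives `2k sin(π/k) ≤ 2π`. For `ℓ ≥ 2`, the angle `πℓ/k` is at most
`π/2`, so Jordan's inequality `sin x ≥ 2x/π` gives `2k sin(πℓ/k) ≥ 4ℓ ≥ 8`.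
-/

open Real

lemma mul_sin_div_le {x n : ℝ} (hx : 0 ≤ x) (hn : 0 < n) : n * sin (x / n) ≤ x := by
  calc n * sin (x / n) ≤ n * (x / n) := by gcongr; exact sin_le (by positivity)
    _ = x := by field_simp

lemma two_mul_div_le_sin_pi_mul_div {a b : ℝ} (ha : 0 ≤ a) (hab : 2 * a ≤ b) (hb : 0 < b) :
    2 * a / b ≤ sin (π * a / b) := by
  have hangle : π * a / b ≤ π / 2 := by
    rw [div_le_div_iff₀ hb two_pos]
    nlinarith [pi_pos]
  calc 2 * a / b = 2 / π * (π * a / b) := by field_simp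
    _ ≤ sin (π * a / b) := mul_le_sin (by positivity) hangle

theorem no_length_between_two_pi_and_eight_general (k ℓ : ℕ) (hℓ : 1 ≤ ℓ)
    (hℓk : 2 * ℓ ≤ k) :
    2 * (k : ℝ) * Real.sin (Real.pi * ℓ / k) ≤ 2 * Real.pi ∨
      8 ≤ 2 * (k : ℝ) * Real.sin (Real.pi * ℓ / k) := by
  have hkℓ : 2 * (ℓ : ℝ) ≤ k := by exact_mod_cast hℓk
  have hk : (0 : ℝ) < k := by
    have : (1 : ℝ) ≤ ℓ := by exact_mod_cast hℓ
    linarith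
  rcases hℓ.eq_or_lt with rfl | hℓ2
  · left
    have := mul_sin_div_le pi_pos.le hk
    simp only [Nat.cast_one, mul_one]
    linarith
  · right
    have hℓ2 : (2 : ℝ) ≤ ℓ := by exact_mod_cast hℓ2
    have hsin := two_mul_div_le_sin_pi_mul_div (by positivity) hkℓ hk
    calc (8 : ℝ) ≤ 2 * k * (2 * ℓ / k) := by field_simp; linarith
      _ ≤ 2 * k * sin (π * ℓ / k) := by gcongr

theorem no_length_between_two_pi_and_eight (k ℓ : ℕ) (hk : 2 ≤ k) (hℓ : 1 ≤ ℓ)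
    (hℓk : 2 * ℓ ≤ k) :
    2 * (k : ℝ) * Real.sin (Real.pi * ℓ / k) ≤ 2 * Real.pi ∨
      8 ≤ 2 * (k : ℝ) * Real.sin (Real.pi * ℓ / k) :=
  no_length_between_two_pi_and_eight_general k ℓ hℓ hℓk
end

section
/- Define A(t) = ∫₀^∞ e^{−u³/6} [γ e^{γ t u} + e^{−t u}] du with γ = e^{iπ/3}. Then A satisfies the Airy-type equation A''(t) + 2 t A(t) = 0 for all real t. -/
/-!
Write `f_c t = ∫₀^∞ exp (-u³/6 + c t u) du`, so that `A = γ f_γ + f_{-1}`. Differentiating under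
the integral gives `f_c'' t = c² ∫₀^∞ u² exp (-u³/6 + c t u) du`, and integrating
`d/du exp (-u³/6 + c t u) = (-u²/2 + c t) exp (-u³/6 + c t u)` over `(0, ∞)` gives
`∫₀^∞ u² exp (-u³/6 + c t u) du = 2 c t f_c t + 2`. Both `c = γ` and `c = -1` are cube roots of `-1`,
so `f_c'' + 2 t f_c = 2 c²`, and `A'' + 2 t A = 2 γ³ + 2 = 0`.
-/

open MeasureTheory Complex

open Set Filter Topology

noncomputable section

lemma integrableOn_pow_mul_exp_sub_cube (n : ℕ) (S : ℝ) :
    IntegrableOn (fun u : ℝ => u ^ n * Real.exp (S * u - u ^ 3 / 6)) (Ioi 0) := by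
  refine integrable_of_isBigO_exp_neg one_pos (by fun_prop) (Asymptotics.IsBigO.of_bound 1 ?_)
  filter_upwards [eventually_ge_atTop (max 1 (6 * (S + n + 1)))] with u hu
  have hu1 : 1 ≤ u := (le_max_left _ _).trans hu
  have huS : 6 * (S + n + 1) ≤ u := (le_max_right _ _).trans hu
  have hpow : u ^ n ≤ Real.exp (n * u) := by
    calc u ^ n ≤ Real.exp u ^ n :=
          pow_le_pow_left₀ (by linarith) ((le_add_of_nonneg_right zero_le_one).trans
            (Real.add_one_le_exp u)) n
      _ = Real.exp (n * u) := by rw [← Real.exp_nat_mul]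
  rw [Real.norm_of_nonneg (by positivity), Real.norm_of_nonneg (by positivity), one_mul]
  calc u ^ n * Real.exp (S * u - u ^ 3 / 6)
      ≤ Real.exp (n * u) * Real.exp (S * u - u ^ 3 / 6) := by gcongr
    _ = Real.exp ((S + n) * u - u ^ 3 / 6) := by rw [← Real.exp_add]; ring_nf
    _ ≤ Real.exp (-1 * u) := by
      have hsq : 6 * (S + n + 1) ≤ u ^ 2 := by nlinarith
      exact Real.exp_le_exp.2 (by nlinarith [mul_le_mul_of_nonneg_left hsq (by linarith : 0 ≤ u)])

def airyKernel (c : ℂ) (t u : ℝ) : ℂ := cexp (-(u : ℂ) ^ 3 / 6 + c * t * u)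

def airyMoment (n : ℕ) (c : ℂ) (t : ℝ) : ℂ := ∫ u in Ioi (0 : ℝ), (u : ℂ) ^ n * airyKernel c t u

lemma norm_pow_mul_airyKernel_le {n : ℕ} {c : ℂ} {t u S : ℝ} (hu : 0 ≤ u) (hS : ‖c‖ * |t| ≤ S) :
    ‖(u : ℂ) ^ n * airyKernel c t u‖ ≤ u ^ n * Real.exp (S * u - u ^ 3 / 6) := by
  have hre : c.re * t ≤ S :=
    calc c.re * t ≤ |c.re * t| := le_abs_self _
      _ = |c.re| * |t| := abs_mul _ _
      _ ≤ ‖c‖ * |t| := by gcongr; exact abs_re_le_norm c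
      _ ≤ S := hS
  rw [norm_mul, norm_pow, norm_real, Real.norm_of_nonneg hu, airyKernel, norm_exp]
  gcongr
  simp [← ofReal_pow]
  nlinarith

lemma continuous_pow_mul_airyKernel (n : ℕ) (c : ℂ) (t : ℝ) :
    Continuous fun u : ℝ => (u : ℂ) ^ n * airyKernel c t u := by
  unfold airyKernel; fun_prop

lemma integrableOn_pow_mul_airyKernel (n : ℕ) (c : ℂ) (t : ℝ) :
    IntegrableOn (fun u : ℝ => (u : ℂ) ^ n * airyKernel c t u) (Ioi 0) := by
  refine (integrableOn_pow_mul_exp_sub_cube n (‖c‖ * |t|)).mono'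
    (continuous_pow_mul_airyKernel n c t).aestronglyMeasurable ?_
  filter_upwards [ae_restrict_mem measurableSet_Ioi] with u hu
  exact norm_pow_mul_airyKernel_le (le_of_lt hu) le_rfl

lemma hasDerivAt_airyKernel_param (c : ℂ) (t u : ℝ) :
    HasDerivAt (fun t => airyKernel c t u) (c * u * airyKernel c t u) t := by
  have ht : HasDerivAt (fun t : ℝ => (t : ℂ)) 1 t := (hasDerivAt_id t).ofReal_comp
  have : HasDerivAt (fun t : ℝ => -(u : ℂ) ^ 3 / 6 + c * t * u) (c * u) t :=
    (((ht.const_mul c).mul_const (u : ℂ)).const_add _).congr_deriv (by ring)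
  exact this.cexp.congr_deriv (by rw [airyKernel]; ring)

lemma hasDerivAt_airyKernel (c : ℂ) (t u : ℝ) :
    HasDerivAt (airyKernel c t) ((-(u : ℂ) ^ 2 / 2 + c * t) * airyKernel c t u) u := by
  have hu : HasDerivAt (fun u : ℝ => (u : ℂ)) 1 u := (hasDerivAt_id u).ofReal_comp
  have : HasDerivAt (fun u : ℝ => -(u : ℂ) ^ 3 / 6 + c * t * u) (-(u : ℂ) ^ 2 / 2 + c * t) u :=
    (((hu.pow 3).neg.div_const 6).add (hu.const_mul (c * t))).congr_deriv (by norm_num; ring)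
  exact this.cexp.congr_deriv (by rw [airyKernel]; ring)

lemma hasDerivAt_airyMoment (n : ℕ) (c : ℂ) (t₀ : ℝ) :
    HasDerivAt (airyMoment n c) (c * airyMoment (n + 1) c t₀) t₀ := by
  set S := ‖c‖ * (|t₀| + 1)
  have hS : ∀ t ∈ Metric.ball t₀ 1, ‖c‖ * |t| ≤ S := fun t ht => by
    have := abs_sub_abs_le_abs_sub t t₀
    rw [Metric.mem_ball, Real.dist_eq] at ht
    exact mul_le_mul_of_nonneg_left (by linarith) (norm_nonneg c)
  have hdom := hasDerivAt_integral_of_dominated_loc_of_deriv_le (μ := volume.restrict (Ioi 0))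
    (F := fun t u => (u : ℂ) ^ n * airyKernel c t u)
    (F' := fun t u => c * ((u : ℂ) ^ (n + 1) * airyKernel c t u))
    (bound := fun u => ‖c‖ * (u ^ (n + 1) * Real.exp (S * u - u ^ 3 / 6)))
    (Metric.ball_mem_nhds t₀ one_pos)
    (.of_forall fun t => (continuous_pow_mul_airyKernel n c t).aestronglyMeasurable)
    (integrableOn_pow_mul_airyKernel n c t₀)
    ((continuous_pow_mul_airyKernel (n + 1) c t₀).aestronglyMeasurable.const_mul c)
    ?_ ((integrableOn_pow_mul_exp_sub_cube (n + 1) S).const_mul ‖c‖)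
    (ae_of_all _ fun u t _ =>
      ((hasDerivAt_airyKernel_param c t u).const_mul _).congr_deriv (by ring))
  · have := hdom.2
    simp only [integral_const_mul] at this
    exact this
  · filter_upwards [ae_restrict_mem measurableSet_Ioi] with u hu t ht
    rw [norm_mul]
    gcongr
    exact norm_pow_mul_airyKernel_le hu.le (hS t ht)

lemma airyMoment_two (c : ℂ) (t : ℝ) : airyMoment 2 c t = 2 * c * t * airyMoment 0 c t + 2 := by
  have h2 := (integrableOn_pow_mul_airyKernel 2 c t).const_mul (-1 / 2)
  have h0 := (integrableOn_pow_mul_airyKernel 0 c t).const_mul (c * t)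
  have hsplit : ∀ u : ℝ, (-(u : ℂ) ^ 2 / 2 + c * t) * airyKernel c t u =
      -1 / 2 * ((u : ℂ) ^ 2 * airyKernel c t u) + c * t * ((u : ℂ) ^ 0 * airyKernel c t u) :=
    fun u => by ring
  have hint : IntegrableOn (fun u : ℝ => (-(u : ℂ) ^ 2 / 2 + c * t) * airyKernel c t u) (Ioi 0) :=
    (h2.add h0).congr (ae_of_all _ fun u => (hsplit u).symm)
  have hlim : Tendsto (airyKernel c t) atTop (𝓝 0) :=
    tendsto_zero_of_hasDerivAt_of_integrableOn_Ioi (fun u _ => hasDerivAt_airyKernel c t u) hint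
      (by simpa using integrableOn_pow_mul_airyKernel 0 c t)
  have hFTC := integral_Ioi_of_hasDerivAt_of_tendsto' (fun u _ => hasDerivAt_airyKernel c t u)
    hint hlim
  rw [funext hsplit, integral_add h2 h0, integral_const_mul, integral_const_mul] at hFTC
  simp only [airyMoment] at hFTC ⊢
  have hk0 : airyKernel c t 0 = 1 := by simp [airyKernel]
  linear_combination -2 * hFTC + 2 * hk0

end

theorem airy_type_equation :
    let γ : ℂ := Complex.exp (Real.pi * Complex.I / 3)
    let A : ℝ → ℂ := fun t =>
      ∫ u in Set.Ioi (0 : ℝ), Complex.exp (-(u : ℂ) ^ 3 / 6) *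
        (γ * Complex.exp (γ * t * u) + Complex.exp (-(t : ℂ) * u))
    ∃ A' A'' : ℝ → ℂ,
      (∀ t : ℝ, HasDerivAt A (A' t) t) ∧
      (∀ t : ℝ, HasDerivAt A' (A'' t) t) ∧
      ∀ t : ℝ, A'' t + 2 * t * A t = 0 := by
  intro γ A
  have hγ : γ ^ 3 = -1 := by
    rw [← Complex.exp_nat_mul,
      show ((3 : ℕ) : ℂ) * (Real.pi * I / 3) = Real.pi * I by push_cast; ring, exp_pi_mul_I]
  have hA : A = fun t => γ * airyMoment 0 γ t + airyMoment 0 (-1) t := funext fun t => by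
    simp only [A, airyMoment]
    rw [← integral_const_mul, ← integral_add ((integrableOn_pow_mul_airyKernel 0 γ t).const_mul γ)
      (integrableOn_pow_mul_airyKernel 0 (-1) t)]
    refine integral_congr_ae (ae_of_all _ fun u => ?_)
    simp only [airyKernel, Complex.exp_add]
    ring_nf
  refine ⟨fun t => γ * (γ * airyMoment 1 γ t) + -1 * airyMoment 1 (-1) t,
    fun t => γ * (γ * (γ * airyMoment 2 γ t)) + -1 * (-1 * airyMoment 2 (-1) t),
    fun t => ?_, fun t => ?_, fun t => ?_⟩
  · rw [hA]
    exact ((hasDerivAt_airyMoment 0 γ t).const_mul γ).add (hasDerivAt_airyMoment 0 (-1) t)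
  · exact (((hasDerivAt_airyMoment 1 γ t).const_mul γ).const_mul γ).add
      ((hasDerivAt_airyMoment 1 (-1) t).const_mul (-1))
  · rw [hA]
    dsimp only
    rw [airyMoment_two, airyMoment_two]
    linear_combination (2 * γ * t * airyMoment 0 γ t + 2) * hγ
end
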